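/- Let H be a real Hilbert space, 𝒞 ⊆ H a nonempty closed convex set, and 𝔸 : H → H a bounded symmetric coercive linear operator with coercivity constant γ > 0. Let T > 0, let g : (0,T) → H, and for i = 1, 2 let σᵢ : [0,T] → H be an H¹(0,T;H)-curve with derivative σᵢ' such that σ₁(0) = σ₂(0) and, for almost every t ∈ (0,T): σᵢ(t) ∈ 𝒞 and ⟪𝔸σᵢ'(t) − g(t), τ − σᵢ(t)⟫ ≥ 0 for all τ ∈ 𝒞. Then σ₁(t) = σ₂(t) for all t ∈ [0,T]. (Uniqueness of the reduced solution / stress field of quasi-static perfect plasticity in abstract form.) -/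

import Mathlib

open RealInnerProductSpace MeasureTheory

/-- `σ : [0,T] → H` is an `H¹(0,T;H)`-curve with derivative `σ'`: the derivative is
Bochner measurable and square integrable on `(0,T)`, and
`σ(t) = σ(0) + ∫₀ᵗ σ'(s) ds` for all `t ∈ [0,T]`. -/
def IsH1Curve {H : Type*} [NormedAddCommGroup H] [NormedSpace ℝ H] [CompleteSpace H]
    (T : ℝ) (σ σ' : ℝ → H) : Prop :=
  MemLp σ' 2 (volume.restrict (Set.Ioo 0 T)) ∧
    ∀ t ∈ Set.Icc 0 T, σ t = σ 0 + ∫ s in (0:ℝ)..t, σ' s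

/-!
If `δ = σ₁ - σ₂`, testing the inequality for each solution with the other one gives
`⟪𝔸 δ', δ⟫ ≤ 0` almost everywhere. Since `δ 0 = 0` and `𝔸` is symmetric,
`⟪𝔸 δ t, δ t⟫ = 2 ∫₀ᵗ ⟪𝔸 δ', δ⟫ ≤ 0`, and coercivity forces `δ t = 0`.
The energy identity needs no differentiation: with `δ t = ∫₀ᵗ δ'`, the quadratic form is the
integral of a symmetric kernel over the square `(0,t)²`, i.e. twice its integral over the
triangle below the diagonal, and the inner integral over that triangle is `δ s`.
-/

open Set Function

section Kernel

variable {E : Type*} [NormedAddCommGroup E] [NormedSpace ℝ E]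

theorem integral_prod_indicator {α β : Type*} [MeasurableSpace α] [MeasurableSpace β]
    {μ : Measure α} {ν : Measure β} [SFinite μ] [SFinite ν] {S : Set (α × β)}
    (hS : MeasurableSet S) {k : α → β → E} (hk : Integrable (uncurry k) (μ.prod ν)) :
    ∫ p, S.indicator (uncurry k) p ∂μ.prod ν = ∫ x, ∫ y in Prod.mk x ⁻¹' S, k x y ∂ν ∂μ := by
  rw [← integral_integral (f := fun x y => S.indicator (uncurry k) (x, y)) (hk.indicator hS)]
  congr 1 with x
  exact integral_indicator (measurable_prodMk_left hS)

theorem integral_prod_eq_two_smul_integral_Iio {μ : Measure ℝ} [SFinite μ] [NullSingletonClass μ]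
    {k : ℝ → ℝ → E} (hsymm : ∀ s u, k s u = k u s) (hk : Integrable (uncurry k) (μ.prod μ)) :
    ∫ p, uncurry k p ∂μ.prod μ = (2 : ℝ) • ∫ s, ∫ u in Iio s, k s u ∂μ ∂μ := by
  set L : Set (ℝ × ℝ) := {p | p.2 < p.1}
  have hL : MeasurableSet L := measurableSet_lt measurable_snd measurable_fst
  have hlower : ∫ p, L.indicator (uncurry k) p ∂μ.prod μ = ∫ s, ∫ u in Iio s, k s u ∂μ ∂μ :=
    integral_prod_indicator hL hk
  -- reflection in the diagonal maps the upper triangle onto the closed lower one, whose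
  -- slices `Iic s` differ from `Iio s` by a `μ`-null point
  have hupper : ∫ p, Lᶜ.indicator (uncurry k) p ∂μ.prod μ = ∫ s, ∫ u in Iio s, k s u ∂μ ∂μ := by
    have hswap : (fun p => Lᶜ.indicator (uncurry k) p.swap) =
        {p : ℝ × ℝ | p.2 ≤ p.1}.indicator (uncurry k) := by
      ext ⟨s, u⟩
      simp [L, indicator_apply, hsymm u s]
    rw [← integral_prod_swap, hswap,
      integral_prod_indicator (measurableSet_le measurable_snd measurable_fst) hk]
    exact integral_congr_ae (.of_forall fun s => integral_Iic_eq_integral_Iio)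
  calc ∫ p, uncurry k p ∂μ.prod μ
      = ∫ p, L.indicator (uncurry k) p ∂μ.prod μ + ∫ p, Lᶜ.indicator (uncurry k) p ∂μ.prod μ := by
        rw [← integral_add (hk.indicator hL) (hk.indicator hL.compl)]
        simp_rw [L.indicator_self_add_compl_apply]
    _ = (2 : ℝ) • ∫ s, ∫ u in Iio s, k s u ∂μ ∂μ := by rw [hlower, hupper, two_smul]

end Kernel

theorem inner_map_integral_self_eq {H : Type*} [NormedAddCommGroup H] [InnerProductSpace ℝ H]
    [CompleteSpace H] {μ : Measure ℝ} [SFinite μ] [NullSingletonClass μ]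
    {A : H →L[ℝ] H} (hA : (A : H →ₗ[ℝ] H).IsSymmetric) {f : ℝ → H} (hf : Integrable f μ) :
    ⟪A (∫ s, f s ∂μ), ∫ s, f s ∂μ⟫ = 2 * ∫ s, ⟪A (f s), ∫ u in Iio s, f u ∂μ⟫ ∂μ := by
  set k : ℝ → ℝ → ℝ := fun s u => ⟪A (f s), f u⟫
  have hk : Integrable (uncurry k) (μ.prod μ) := by
    refine ((hf.norm.const_mul ‖A‖).mul_prod hf.norm).mono' ?_ (.of_forall fun p => ?_)
    · exact (A.integrable_comp hf).1.comp_fst.inner hf.1.comp_snd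
    · calc ‖uncurry k p‖ ≤ ‖A (f p.1)‖ * ‖f p.2‖ := norm_inner_le_norm _ _
        _ ≤ ‖A‖ * ‖f p.1‖ * ‖f p.2‖ := by gcongr; exact A.le_opNorm _
  have hsymm : ∀ s u, k s u = k u s := fun s u => (hA (f s) (f u)).trans (real_inner_comm _ _)
  calc ⟪A (∫ s, f s ∂μ), ∫ s, f s ∂μ⟫
      = ∫ s, ⟪A (f s), ∫ u, f u ∂μ⟫ ∂μ := by
        rw [← A.integral_comp_comm hf, real_inner_comm, ← integral_inner (A.integrable_comp hf)]
        simp_rw [real_inner_comm]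
    _ = ∫ p, uncurry k p ∂μ.prod μ := by
        rw [integral_prod _ hk]
        simp_rw [uncurry_apply_pair, k, integral_inner hf]
    _ = 2 * ∫ s, ⟪A (f s), ∫ u in Iio s, f u ∂μ⟫ ∂μ := by
        rw [integral_prod_eq_two_smul_integral_Iio hsymm hk, smul_eq_mul]
        simp_rw [k, integral_inner hf.integrableOn]

namespace IsH1Curve

variable {H : Type*} [NormedAddCommGroup H] [InnerProductSpace ℝ H] [CompleteSpace H]
  {T t : ℝ} {σ σ' : ℝ → H}

theorem integrableOn (h : IsH1Curve T σ σ') : IntegrableOn σ' (Ioo 0 T) :=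
  haveI := isFiniteMeasure_restrict.2 (measure_Ioo_lt_top (μ := volume) (a := 0) (b := T)).ne
  h.1.integrable one_le_two

theorem intervalIntegrable (h : IsH1Curve T σ σ') (ht : t ∈ Icc 0 T) :
    IntervalIntegrable σ' volume 0 t :=
  (intervalIntegrable_iff_integrableOn_Ioo_of_le ht.1).2
    (h.integrableOn.mono_set (Ioo_subset_Ioo_right ht.2))

theorem sub {σ₁ σ₂ σ₁' σ₂' : ℝ → H} (h₁ : IsH1Curve T σ₁ σ₁') (h₂ : IsH1Curve T σ₂ σ₂') :
    IsH1Curve T (σ₁ - σ₂) (σ₁' - σ₂') := by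
  refine ⟨h₁.1.sub h₂.1, fun t ht => ?_⟩
  simp only [Pi.sub_apply]
  rw [intervalIntegral.integral_sub (h₁.intervalIntegrable ht) (h₂.intervalIntegrable ht),
    h₁.2 t ht, h₂.2 t ht]
  abel

theorem sub_apply_zero_eq_setIntegral (h : IsH1Curve T σ σ') (ht : t ∈ Icc 0 T) :
    σ t - σ 0 = ∫ s in Ioo 0 t, σ' s := by
  rw [h.2 t ht, intervalIntegral.integral_of_le ht.1, integral_Ioc_eq_integral_Ioo,
    add_sub_cancel_left]

theorem inner_map_sub_apply_zero_self {A : H →L[ℝ] H} (hA : (A : H →ₗ[ℝ] H).IsSymmetric)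
    (h : IsH1Curve T σ σ') (ht : t ∈ Icc 0 T) :
    ⟪A (σ t - σ 0), σ t - σ 0⟫ = 2 * ∫ s in Ioo 0 t, ⟪A (σ' s), σ s - σ 0⟫ := by
  rw [h.sub_apply_zero_eq_setIntegral ht,
    inner_map_integral_self_eq hA (h.integrableOn.mono_set (Ioo_subset_Ioo_right ht.2))]
  congr 1
  refine setIntegral_congr_fun measurableSet_Ioo fun s hs => ?_
  rw [Measure.restrict_restrict measurableSet_Iio, Iio_inter_Ioo, min_eq_left hs.2.le,
    h.sub_apply_zero_eq_setIntegral ⟨hs.1.le, hs.2.le.trans ht.2⟩]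

end IsH1Curve

theorem inner_sub_nonpos_of_forall_inner_nonneg {E : Type*} [NormedAddCommGroup E]
    [InnerProductSpace ℝ E]
    {C : Set E} {x₁ x₂ v₁ v₂ : E} (hx₁ : x₁ ∈ C) (hx₂ : x₂ ∈ C)
    (h₁ : ∀ τ ∈ C, 0 ≤ ⟪v₁, τ - x₁⟫) (h₂ : ∀ τ ∈ C, 0 ≤ ⟪v₂, τ - x₂⟫) :
    ⟪v₁ - v₂, x₁ - x₂⟫ ≤ 0 := by
  have e₁ := h₁ x₂ hx₂
  have e₂ := h₂ x₁ hx₁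
  rw [← neg_sub x₁ x₂, inner_neg_right] at e₁
  rw [inner_sub_left]
  linarith

theorem eq_zero_of_inner_map_self_nonpos {E : Type*} [NormedAddCommGroup E] [InnerProductSpace ℝ E]
    {A : E →L[ℝ] E} {γ : ℝ} (hγ : 0 < γ) (hA : ∀ h : E, γ * ‖h‖ ^ 2 ≤ ⟪A h, h⟫) {x : E}
    (hx : ⟪A x, x⟫ ≤ 0) : x = 0 := by
  have : γ * ‖x‖ ^ 2 ≤ 0 := (hA x).trans hx
  have : ‖x‖ ^ 2 ≤ 0 := nonpos_of_mul_nonpos_right this hγ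
  exact norm_eq_zero.1 (pow_eq_zero_iff two_ne_zero |>.1 (le_antisymm this (sq_nonneg _)))

theorem reduced_solution_uniqueness_general
    {H : Type*} [NormedAddCommGroup H] [InnerProductSpace ℝ H] [CompleteSpace H]
    (𝒞 : Set H)
    (A : H →L[ℝ] H) (hAsym : ∀ x y, ⟪A x, y⟫ = ⟪x, A y⟫)
    (γ : ℝ) (hγ : 0 < γ) (hAcoer : ∀ h : H, γ * ‖h‖ ^ 2 ≤ ⟪A h, h⟫)
    (T : ℝ) (g : ℝ → H)
    (σ₁ σ₂ σ₁' σ₂' : ℝ → H)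
    (hσ₁ : IsH1Curve T σ₁ σ₁') (hσ₂ : IsH1Curve T σ₂ σ₂')
    (hinit : σ₁ 0 = σ₂ 0)
    (hvi₁ : ∀ᵐ t ∂(volume.restrict (Set.Ioo 0 T)),
      σ₁ t ∈ 𝒞 ∧ ∀ τ ∈ 𝒞, 0 ≤ ⟪A (σ₁' t) - g t, τ - σ₁ t⟫)
    (hvi₂ : ∀ᵐ t ∂(volume.restrict (Set.Ioo 0 T)),
      σ₂ t ∈ 𝒞 ∧ ∀ τ ∈ 𝒞, 0 ≤ ⟪A (σ₂' t) - g t, τ - σ₂ t⟫) :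
    ∀ t ∈ Set.Icc 0 T, σ₁ t = σ₂ t := by
  intro t ht
  have hδ0 : (σ₁ - σ₂) 0 = 0 := sub_eq_zero.2 hinit
  have hdissipation : ∀ᵐ s ∂(volume.restrict (Ioo 0 T)),
      ⟪A ((σ₁' - σ₂') s), (σ₁ - σ₂) s - (σ₁ - σ₂) 0⟫ ≤ 0 := by
    filter_upwards [hvi₁, hvi₂] with s ⟨hC₁, h₁⟩ ⟨hC₂, h₂⟩
    simpa only [hδ0, sub_zero, Pi.sub_apply, map_sub, sub_sub_sub_cancel_right] using
      inner_sub_nonpos_of_forall_inner_nonneg hC₁ hC₂ h₁ h₂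
  have henergy : ⟪A ((σ₁ - σ₂) t - (σ₁ - σ₂) 0), (σ₁ - σ₂) t - (σ₁ - σ₂) 0⟫ ≤ 0 := by
    rw [(hσ₁.sub hσ₂).inner_map_sub_apply_zero_self hAsym ht]
    exact mul_nonpos_of_nonneg_of_nonpos zero_le_two <| integral_nonpos_of_ae <|
      ae_restrict_of_ae_restrict_of_subset (Ioo_subset_Ioo_right ht.2) hdissipation
  simpa [hδ0, sub_eq_zero] using eq_zero_of_inner_map_self_nonpos hγ hAcoer henergy

/-- Uniqueness of the reduced solution (stress field) of quasi-static perfect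
plasticity in abstract form: two `H¹(0,T;H)`-curves with the same initial value
solving the evolution variational inequality
`σᵢ(t) ∈ 𝒞`, `⟪𝔸σᵢ'(t) − g(t), τ − σᵢ(t)⟫ ≥ 0 ∀ τ ∈ 𝒞` a.e. coincide on `[0,T]`. -/
theorem reduced_solution_uniqueness
    {H : Type*} [NormedAddCommGroup H] [InnerProductSpace ℝ H] [CompleteSpace H]
    (𝒞 : Set H) (h𝒞 : 𝒞.Nonempty) (h𝒞closed : IsClosed 𝒞) (h𝒞conv : Convex ℝ 𝒞)
    (A : H →L[ℝ] H) (hAsym : ∀ x y, ⟪A x, y⟫ = ⟪x, A y⟫)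
    (γ : ℝ) (hγ : 0 < γ) (hAcoer : ∀ h : H, γ * ‖h‖ ^ 2 ≤ ⟪A h, h⟫)
    (T : ℝ) (hT : 0 < T) (g : ℝ → H)
    (σ₁ σ₂ σ₁' σ₂' : ℝ → H)
    (hσ₁ : IsH1Curve T σ₁ σ₁') (hσ₂ : IsH1Curve T σ₂ σ₂')
    (hinit : σ₁ 0 = σ₂ 0)
    (hvi₁ : ∀ᵐ t ∂(volume.restrict (Set.Ioo 0 T)),
      σ₁ t ∈ 𝒞 ∧ ∀ τ ∈ 𝒞, 0 ≤ ⟪A (σ₁' t) - g t, τ - σ₁ t⟫)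
    (hvi₂ : ∀ᵐ t ∂(volume.restrict (Set.Ioo 0 T)),
      σ₂ t ∈ 𝒞 ∧ ∀ τ ∈ 𝒞, 0 ≤ ⟪A (σ₂' t) - g t, τ - σ₂ t⟫) :
    ∀ t ∈ Set.Icc 0 T, σ₁ t = σ₂ t :=
  reduced_solution_uniqueness_general 𝒞 A hAsym γ hγ hAcoer T g σ₁ σ₂ σ₁' σ₂' hσ₁ hσ₂ hinit hvi₁
    hvi₂
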